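/- Let X, Y be real Banach spaces, U ⊆ X open, f : U → Y a continuous map, and Jf a pseudo-Jacobian mapping for f on U satisfying the chain rule condition. Suppose α := inf{ν(T) : T ∈ co Jf(x) for some x ∈ U} > 0, where ν(T) is the surjectivity index of T. Then for each open ball B(x₀, δ) ⊆ U one has B(f(x₀), δα) ⊆ f(B(x₀, δ)); consequently f(U) is open in Y and f is an open map from U onto f(U). -/

import Mathlib

/-!
Fix `y` with `‖f x₀ - y‖ < δ α` and apply Ekeland's variational principle to `z ↦ ‖f z - y‖` on a
closed ball inside `B(x₀, δ)`, with slope `σ < α`. The resulting point `x` stays inside that ball,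
and from `x` the function `‖f · - y‖` decreases at rate at most `σ` in every unit direction. If
`f x ≠ y`, the chain rule condition makes `A_{x,y}(f)` a weak-star closed convex pseudo-Jacobian of
`‖f · - y‖` at `x`, all of whose elements have norm at least `α`, since Clarke subgradients of the
norm away from `0` have norm `1`. Separating it from the weak-star compact ball of radius
`β ∈ (σ, α)` yields a unit direction of descent at rate `β > σ`, a contradiction. Openness follows
by applying this at every point.
-/

open Filter Topology Metric Set Bornology

noncomputable section

/-- Upper right-hand Dini directional derivative of `φ` at `x` in direction `v`. -/
def diniUpper {X : Type*} [NormedAddCommGroup X] [NormedSpace ℝ X]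
    (φ : X → ℝ) (x v : X) : ℝ :=
  Filter.limsup (fun t : ℝ => (φ (x + t • v) - φ x) / t) (𝓝[>] (0 : ℝ))

/-- `J` is a pseudo-Jacobian of `f` at `x`: `J` is a nonempty set of bounded linear
operators such that for every continuous linear functional `p` on `Y` and every
direction `v`, the upper Dini derivative of `p ∘ f` at `x` in direction `v` is bounded
by `sup {p (T v) : T ∈ J}`. -/
def IsPseudoJacobianAt {X Y : Type*} [NormedAddCommGroup X] [NormedSpace ℝ X]
    [NormedAddCommGroup Y] [NormedSpace ℝ Y]
    (f : X → Y) (J : Set (X →L[ℝ] Y)) (x : X) : Prop :=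
  J.Nonempty ∧ ∀ (p : Y →L[ℝ] ℝ) (v : X),
    diniUpper (fun z => p (f z)) x v ≤ sSup ((fun T : X →L[ℝ] Y => p (T v)) '' J)


/-- Clarke generalized directional derivative of `φ` at `y` in direction `w`:
`limsup_{z → y, t → 0⁺} (φ (z + t w) − φ z)/t`. -/
def clarkeDirDeriv {Y : Type*} [NormedAddCommGroup Y] [NormedSpace ℝ Y]
    (φ : Y → ℝ) (y w : Y) : ℝ :=
  Filter.limsup (fun q : Y × ℝ => (φ (q.1 + q.2 • w) - φ q.1) / q.2)
    ((𝓝 y) ×ˢ (𝓝[>] (0 : ℝ)))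

/-- Clarke subdifferential of `φ` at `y`. -/
def clarkeSubdiff {Y : Type*} [NormedAddCommGroup Y] [NormedSpace ℝ Y]
    (φ : Y → ℝ) (y : Y) : Set (Y →L[ℝ] ℝ) :=
  {p | ∀ w : Y, p w ≤ clarkeDirDeriv φ y w}

/-- The set `A_{x,y}(f) = ∂‖·‖(f x − y) ∘ co (Jf x) ⊆ X*`. -/
def pjComp {X Y : Type*} [NormedAddCommGroup X] [NormedSpace ℝ X]
    [NormedAddCommGroup Y] [NormedSpace ℝ Y]
    (f : X → Y) (Jf : X → Set (X →L[ℝ] Y)) (x : X) (y : Y) : Set (X →L[ℝ] ℝ) :=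
  {S | ∃ p ∈ clarkeSubdiff (fun w : Y => ‖w‖) (f x - y),
       ∃ T ∈ convexHull ℝ (Jf x), S = p.comp T}

/-- The pseudo-Jacobian mapping `Jf` satisfies the chain rule condition on `U`:
for every `x ∈ U` and every `y ≠ f x`, the set `A_{x,y}(f)` is weak-star closed,
convex, and is a pseudo-Jacobian at `x` of the function `z ↦ ‖f z − y‖`. -/
def ChainRuleCond {X Y : Type*} [NormedAddCommGroup X] [NormedSpace ℝ X]
    [NormedAddCommGroup Y] [NormedSpace ℝ Y]
    (f : X → Y) (Jf : X → Set (X →L[ℝ] Y)) (U : Set X) : Prop :=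
  ∀ x ∈ U, ∀ y : Y, y ≠ f x →
    IsClosed ((StrongDual.toWeakDual : (X →L[ℝ] ℝ) → WeakDual ℝ X) ''
        pjComp f Jf x y) ∧
    Convex ℝ (pjComp f Jf x y) ∧
    IsPseudoJacobianAt (fun z : X => ‖f z - y‖) (pjComp f Jf x y) x

/-- The surjectivity index `ν(T)` of a bounded linear operator `T : X → Y`: the co-norm
of the adjoint operator `T* : Y* → X*`, i.e. `inf {‖y* ∘ T‖ : ‖y*‖ = 1}`. -/
def nuIndex {X Y : Type*} [NormedAddCommGroup X] [NormedSpace ℝ X]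
    [NormedAddCommGroup Y] [NormedSpace ℝ Y] (T : X →L[ℝ] Y) : ℝ :=
  sInf {c : ℝ | ∃ p : Y →L[ℝ] ℝ, ‖p‖ = 1 ∧ c = ‖p.comp T‖}

section Ekeland

variable {M : Type*} [MetricSpace M] {g : M → ℝ} {ε : ℝ}

def ekelandSet (g : M → ℝ) (ε : ℝ) (x : M) : Set M :=
  {z | g z + ε * dist z x ≤ g x}

theorem self_mem_ekelandSet (x : M) : x ∈ ekelandSet g ε x := by
  simp [ekelandSet]

theorem ekelandSet_subset (hε : 0 ≤ ε) {x z : M} (hz : z ∈ ekelandSet g ε x) :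
    ekelandSet g ε z ⊆ ekelandSet g ε x := fun w hw => by
  have := dist_triangle w z x
  simp only [ekelandSet, mem_ofPred_eq] at *
  nlinarith

theorem isClosed_ekelandSet (hg : LowerSemicontinuous g) (x : M) :
    IsClosed (ekelandSet g ε x) :=
  (hg.add (continuous_const.mul (continuous_id.dist continuous_const)).lowerSemicontinuous)
    |>.isClosed_preimage (g x)

/-- Each `s (n + 1)` minimises `g` on `ekelandSet g ε (s n)` up to `2⁻ⁿ`. -/
theorem exists_seq_ekelandSet (hε : 0 ≤ ε) (hb : BddBelow (range g)) (x₀ : M) :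
    ∃ s : ℕ → M, s 0 = x₀ ∧ ∀ n, s (n + 1) ∈ ekelandSet g ε (s n) ∧
      ∀ z ∈ ekelandSet g ε (s (n + 1)), ε * dist z (s (n + 1)) ≤ (1 / 2) ^ n := by
  have step (x : M) (n : ℕ) : ∃ z ∈ ekelandSet g ε x,
      ∀ w ∈ ekelandSet g ε x, g z ≤ g w + (1 / 2) ^ n := by
    obtain ⟨_, ⟨z, hz, rfl⟩, hlt⟩ := exists_lt_of_csInf_lt
      ((nonempty_of_mem (self_mem_ekelandSet x)).image g)
      (lt_add_of_pos_right (sInf (g '' ekelandSet g ε x)) (by positivity : (0 : ℝ) < (1 / 2) ^ n))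
    refine ⟨z, hz, fun w hw => ?_⟩
    have := csInf_le (hb.mono (image_subset_range g _)) (mem_image_of_mem g hw)
    linarith
  choose next hnext_mem hnext_min using step
  let s : ℕ → M := fun n => Nat.rec x₀ (fun n x => next x n) n
  refine ⟨s, rfl, fun n => ⟨hnext_mem (s n) n, fun z hz => ?_⟩⟩
  have hmin := hnext_min (s n) n z (ekelandSet_subset hε (hnext_mem (s n) n) hz)
  have hz' : g z + ε * dist z (next (s n) n) ≤ g (next (s n) n) := hz
  show ε * dist z (next (s n) n) ≤ _
  linarith

theorem exists_ekeland [CompleteSpace M] (hg : LowerSemicontinuous g) (hb : BddBelow (range g))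
    (hε : 0 < ε) (x₀ : M) :
    ∃ x, g x + ε * dist x x₀ ≤ g x₀ ∧ ∀ z, g x ≤ g z + ε * dist z x := by
  obtain ⟨s, hs0, hs⟩ := exists_seq_ekelandSet hε.le hb x₀
  have hchain {n m : ℕ} (hnm : n ≤ m) : s m ∈ ekelandSet g ε (s n) := by
    induction m, hnm using Nat.le_induction with
    | base => exact self_mem_ekelandSet _
    | succ m _ ih => exact ekelandSet_subset hε.le ih (hs m).1
  have hdist {n : ℕ} {z : M} (hz : z ∈ ekelandSet g ε (s (n + 1))) :
      dist z (s (n + 1)) ≤ (1 / 2) ^ n / ε := by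
    rw [le_div_iff₀ hε, mul_comm]
    exact (hs n).2 z hz
  have hcauchy : CauchySeq fun n => s (n + 1) := by
    refine cauchySeq_of_le_geometric_two (C := 2 / ε) fun n => ?_
    rw [dist_comm]
    convert hdist (hs (n + 1)).1 using 1
    rw [one_div_pow]
    ring
  obtain ⟨x, hx⟩ := cauchySeq_tendsto_of_complete hcauchy
  have hx_mem (n : ℕ) : x ∈ ekelandSet g ε (s n) :=
    (isClosed_ekelandSet hg _).mem_of_tendsto hx
      (eventually_atTop.2 ⟨n, fun m hm => hchain (by omega)⟩)
  refine ⟨x, hs0 ▸ hx_mem 0, fun z => ?_⟩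
  by_cases hz : z ∈ ekelandSet g ε x
  · suffices z = x by simp [this]
    have hz_lim : Tendsto (fun n => s (n + 1)) atTop (𝓝 z) := by
      refine tendsto_iff_dist_tendsto_zero.2 (squeeze_zero (fun _ => dist_nonneg)
        (fun n => (dist_comm _ _).trans_le
          (hdist (ekelandSet_subset hε.le (hx_mem (n + 1)) hz))) ?_)
      simpa using (tendsto_pow_atTop_nhds_zero_of_lt_one (by norm_num : (0 : ℝ) ≤ 1 / 2)
        (by norm_num)).div_const ε
    exact tendsto_nhds_unique hz_lim hx
  · simp only [ekelandSet, mem_ofPred_eq, not_le] at hz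
    linarith

theorem IsClosed.exists_ekeland [CompleteSpace M] {S : Set M} (hS : IsClosed S)
    (hg : LowerSemicontinuousOn g S) (hb : BddBelow (g '' S)) (hε : 0 < ε) {x₀ : M}
    (hx₀ : x₀ ∈ S) :
    ∃ x ∈ S, g x + ε * dist x x₀ ≤ g x₀ ∧ ∀ z ∈ S, g x ≤ g z + ε * dist z x := by
  have := hS.completeSpace_coe
  obtain ⟨⟨x, hx⟩, h₀, hmin⟩ := _root_.exists_ekeland (lowerSemicontinuous_restrict_iff.mpr hg)
    (by rwa [range_domRestrict]) hε ⟨x₀, hx₀⟩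
  exact ⟨x, hx, h₀, fun z hz => hmin ⟨z, hz⟩⟩

end Ekeland

section NormClarke

variable {Y : Type*} [NormedAddCommGroup Y] [NormedSpace ℝ Y]

theorem abs_norm_add_smul_sub_norm_div_le (z w : Y) {t : ℝ} (ht : 0 < t) :
    |(‖z + t • w‖ - ‖z‖) / t| ≤ ‖w‖ := by
  rw [abs_div, abs_of_pos ht, div_le_iff₀ ht]
  calc |‖z + t • w‖ - ‖z‖| ≤ ‖z + t • w - z‖ := abs_norm_sub_norm_le _ _
    _ = ‖w‖ * t := by rw [add_sub_cancel_left, norm_smul, Real.norm_of_nonneg ht.le, mul_comm]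

theorem isCoboundedUnder_clarke_norm (y w : Y) :
    IsCoboundedUnder (· ≤ ·) ((𝓝 y) ×ˢ (𝓝[>] (0 : ℝ)))
      (fun q : Y × ℝ => (‖q.1 + q.2 • w‖ - ‖q.1‖) / q.2) :=
  isCoboundedUnder_le_of_eventually_le _ <|
    (eventually_mem_nhdsWithin.prod_inr _).mono fun q hq =>
      (abs_le.1 (abs_norm_add_smul_sub_norm_div_le q.1 w hq)).1

theorem clarkeDirDeriv_norm_le (y w : Y) : clarkeDirDeriv (fun w : Y => ‖w‖) y w ≤ ‖w‖ :=
  limsup_le_of_le (isCoboundedUnder_clarke_norm y w) <|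
    (eventually_mem_nhdsWithin.prod_inr _).mono fun q hq =>
      (abs_le.1 (abs_norm_add_smul_sub_norm_div_le q.1 w hq)).2

theorem clarkeDirDeriv_norm_neg_self_le (u : Y) :
    clarkeDirDeriv (fun w : Y => ‖w‖) u (-u) ≤ -‖u‖ := by
  refine le_of_forall_pos_le_add fun ε hε => limsup_le_of_le (isCoboundedUnder_clarke_norm u _) ?_
  filter_upwards [prod_mem_prod (ball_mem_nhds u (half_pos hε))
    (Ioo_mem_nhdsGT (zero_lt_one' ℝ))] with ⟨z, t⟩ ⟨hz, ht₀, ht₁⟩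
  rw [mem_ball, dist_eq_norm] at hz
  have hconv : ‖z + t • -u‖ ≤ (1 - t) * ‖z‖ + t * ‖z - u‖ := by
    calc ‖z + t • -u‖ = ‖(1 - t) • z + t • (z - u)‖ := by congr 1; module
      _ ≤ ‖(1 - t) • z‖ + ‖t • (z - u)‖ := norm_add_le _ _
      _ = (1 - t) * ‖z‖ + t * ‖z - u‖ := by
        rw [norm_smul, norm_smul, Real.norm_of_nonneg (by linarith), Real.norm_of_nonneg ht₀.le]
  have hu : ‖u‖ ≤ ‖z‖ + ‖z - u‖ := norm_le_insert z u
  rw [div_le_iff₀ ht₀]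
  nlinarith

theorem norm_eq_one_of_mem_clarkeSubdiff_norm {u : Y} (hu : u ≠ 0) {p : StrongDual ℝ Y}
    (hp : p ∈ clarkeSubdiff (fun w : Y => ‖w‖) u) : ‖p‖ = 1 := by
  have hle : ‖p‖ ≤ 1 := by
    refine p.opNorm_le_bound zero_le_one fun w => ?_
    rw [one_mul, Real.norm_eq_abs, abs_le]
    have hneg := (hp (-w)).trans (clarkeDirDeriv_norm_le u (-w))
    rw [map_neg, norm_neg] at hneg
    exact ⟨by linarith, (hp w).trans (clarkeDirDeriv_norm_le u w)⟩
  have hpu : ‖u‖ ≤ p u := by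
    have := (hp (-u)).trans (clarkeDirDeriv_norm_neg_self_le u)
    rw [map_neg] at this
    linarith
  have hpu' : p u ≤ ‖p‖ * ‖u‖ := (le_abs_self _).trans (p.le_opNorm u)
  have hu' : 0 < ‖u‖ := norm_pos_iff.2 hu
  nlinarith

end NormClarke

section Separation

variable {X : Type*} [NormedAddCommGroup X] [NormedSpace ℝ X]

/-- Separate the weak-star compact (Banach–Alaoglu) ball of radius `β` from `A` by a weak-star
continuous functional; such a functional is evaluation at some `v₀ : X`. -/
theorem exists_norm_le_one_forall_apply_le_neg {A : Set (StrongDual ℝ X)} (hne : A.Nonempty)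
    (hconv : Convex ℝ A) (hcl : IsClosed (StrongDual.toWeakDual '' A)) {α β : ℝ}
    (hβ : 0 ≤ β) (hβα : β < α) (hnorm : ∀ S ∈ A, α ≤ ‖S‖) :
    ∃ v : X, ‖v‖ ≤ 1 ∧ ∀ S ∈ A, S v ≤ -β := by
  have : LocallyConvexSpace ℝ (WeakDual ℝ X) := WeakBilin.locallyConvexSpace
  let K : Set (WeakDual ℝ X) := WeakDual.toStrongDual ⁻¹' closedBall 0 β
  have hKconv : Convex ℝ K := (convex_closedBall _ β).linear_preimage
    (WeakDual.toStrongDual : WeakDual ℝ X ≃ₗ[ℝ] StrongDual ℝ X).toLinearMap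
  have hAconv : Convex ℝ (StrongDual.toWeakDual '' A) := hconv.linear_image
    (StrongDual.toWeakDual : StrongDual ℝ X ≃ₗ[ℝ] WeakDual ℝ X).toLinearMap
  have hdisj : Disjoint K (StrongDual.toWeakDual '' A) := by
    rw [disjoint_left]
    rintro _ hK ⟨S, hS, rfl⟩
    have : ‖S‖ ≤ β := mem_closedBall_zero_iff.1 hK
    linarith [hnorm S hS]
  obtain ⟨ℓ, u, w, hK, huw, hA⟩ := geometric_hahn_banach_compact_closed hKconv
    (WeakDual.isCompact_closedBall 0 β) hAconv hcl hdisj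
  obtain ⟨v₀, rfl⟩ := LinearMap.dualEmbedding_surjective (topDualPairing ℝ X) ℓ
  have hball : β * ‖v₀‖ < u := by
    obtain ⟨g, hg, hgv⟩ := exists_dual_vector'' ℝ v₀
    have hgK : StrongDual.toWeakDual (β • g) ∈ K := by
      change β • g ∈ closedBall 0 β
      rw [mem_closedBall_zero_iff, norm_smul, Real.norm_of_nonneg hβ]
      exact mul_le_of_le_one_right hβ hg
    have : (β • g) v₀ < u := hK _ hgK
    simpa [hgv] using this
  have hlt (S : StrongDual ℝ X) (hS : S ∈ A) : β * ‖v₀‖ < S v₀ :=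
    hball.trans (huw.trans (hA _ ⟨S, hS, rfl⟩))
  have hv₀ : 0 < ‖v₀‖ := by
    obtain ⟨S₀, hS₀⟩ := hne
    refine norm_pos_iff.2 fun h => ?_
    simpa [h] using hlt S₀ hS₀
  refine ⟨-(‖v₀‖⁻¹ • v₀), by simp [norm_smul, hv₀.ne'], fun S hS => ?_⟩
  have := hlt S hS
  rw [map_neg, map_smul, smul_eq_mul, neg_le_neg_iff, le_inv_mul_iff₀ hv₀]
  linarith

end Separation

section Dini

variable {X : Type*} [NormedAddCommGroup X] [NormedSpace ℝ X]

/-- The hypothesis `c ≤ 0` covers the junk value `0` of a real `limsup` that is not bounded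
above. -/
theorem le_diniUpper_of_eventually_le {φ : X → ℝ} {x v : X} {c : ℝ} (hc : c ≤ 0)
    (h : ∀ᶠ t in 𝓝[>] (0 : ℝ), c ≤ (φ (x + t • v) - φ x) / t) : c ≤ diniUpper φ x v := by
  by_cases hb : IsBoundedUnder (· ≤ ·) (𝓝[>] (0 : ℝ)) fun t => (φ (x + t • v) - φ x) / t
  · exact le_limsup_of_frequently_le h.frequently hb
  · have hempty : {a | ∀ᶠ t in 𝓝[>] (0 : ℝ), (φ (x + t • v) - φ x) / t ≤ a} = ∅ :=
      eq_empty_of_forall_notMem fun a ha => hb ⟨a, ha⟩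
    rw [diniUpper, limsup_eq, hempty, Real.sInf_empty]
    exact hc

theorem neg_mul_norm_le_diniUpper {φ : X → ℝ} {x : X} {ε : ℝ} (hε : 0 ≤ ε)
    (h : ∀ᶠ z in 𝓝 x, φ x ≤ φ z + ε * dist z x) (v : X) :
    -(ε * ‖v‖) ≤ diniUpper φ x v := by
  have hline : Tendsto (fun t : ℝ => x + t • v) (𝓝[>] 0) (𝓝 x) := by
    have : Continuous fun t : ℝ => x + t • v := by fun_prop
    simpa using (this.tendsto 0).mono_left nhdsWithin_le_nhds
  refine le_diniUpper_of_eventually_le (neg_nonpos.2 (by positivity)) ?_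
  filter_upwards [hline.eventually h, self_mem_nhdsWithin] with t ht (ht₀ : 0 < t)
  rw [dist_eq_norm, add_sub_cancel_left, norm_smul, Real.norm_of_nonneg ht₀.le] at ht
  rw [le_div_iff₀ ht₀]
  linarith

end Dini

section OpenMapping

variable {X Y : Type*} [NormedAddCommGroup X] [NormedSpace ℝ X]
  [NormedAddCommGroup Y] [NormedSpace ℝ Y]

theorem nuIndex_le_norm_comp (T : X →L[ℝ] Y) {p : StrongDual ℝ Y} (hp : ‖p‖ = 1) :
    nuIndex T ≤ ‖p.comp T‖ :=
  csInf_le ⟨0, by rintro _ ⟨_, _, rfl⟩; positivity⟩ ⟨p, hp, rfl⟩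

theorem le_norm_of_mem_pjComp {f : X → Y} {Jf : X → Set (X →L[ℝ] Y)} {x : X} {y : Y} {α : ℝ}
    (hα : ∀ T ∈ convexHull ℝ (Jf x), α ≤ nuIndex T) (hy : y ≠ f x) {S : StrongDual ℝ X}
    (hS : S ∈ pjComp f Jf x y) : α ≤ ‖S‖ := by
  obtain ⟨p, hp, T, hT, rfl⟩ := hS
  have hp₁ := norm_eq_one_of_mem_clarkeSubdiff_norm (sub_ne_zero.2 hy.symm) hp
  exact (hα T hT).trans (nuIndex_le_norm_comp T hp₁)

theorem exists_diniUpper_norm_sub_le_neg {U : Set X} {f : X → Y} {Jf : X → Set (X →L[ℝ] Y)}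
    (hcrc : ChainRuleCond f Jf U) {x : X} (hx : x ∈ U) {α β : ℝ}
    (hα : ∀ T ∈ convexHull ℝ (Jf x), α ≤ nuIndex T) {y : Y} (hy : y ≠ f x)
    (hβ : 0 ≤ β) (hβα : β < α) :
    ∃ v : X, ‖v‖ ≤ 1 ∧ diniUpper (fun z => ‖f z - y‖) x v ≤ -β := by
  obtain ⟨hcl, hconv, hne, hpj⟩ := hcrc x hx y hy
  obtain ⟨v, hv, hSv⟩ := exists_norm_le_one_forall_apply_le_neg hne hconv hcl hβ hβα
    fun S hS => le_norm_of_mem_pjComp hα hy hS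
  refine ⟨v, hv, (hpj (.id ℝ ℝ) v).trans (csSup_le (hne.image _) ?_)⟩
  rintro _ ⟨S, hS, rfl⟩
  exact hSv S hS

theorem ball_subset_image_ball [CompleteSpace X] {U : Set X} {f : X → Y}
    (hf : ContinuousOn f U) {Jf : X → Set (X →L[ℝ] Y)} (hcrc : ChainRuleCond f Jf U) {α : ℝ}
    (hα : ∀ x ∈ U, ∀ T ∈ convexHull ℝ (Jf x), α ≤ nuIndex T) {x₀ : X} {δ : ℝ} (hδ : 0 < δ)
    (hball : ball x₀ δ ⊆ U) : ball (f x₀) (δ * α) ⊆ f '' ball x₀ δ := by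
  intro y hy
  rw [mem_ball, dist_comm, dist_eq_norm] at hy
  set r := ‖f x₀ - y‖
  obtain ⟨σ, hrσ, hσα⟩ := exists_between (show r / δ < α by rw [div_lt_iff₀ hδ]; linarith)
  have hσ : 0 < σ := (div_nonneg (norm_nonneg _) hδ.le).trans_lt hrσ
  obtain ⟨δ', hrδ', hδ'δ⟩ := exists_between (show r / σ < δ by
    rw [div_lt_iff₀ hσ]; rwa [div_lt_iff₀ hδ, mul_comm] at hrσ)
  have hδ' : 0 ≤ δ' := (div_nonneg (norm_nonneg _) hσ.le).trans hrδ'.le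
  obtain ⟨β, hσβ, hβα⟩ := exists_between hσα
  have hsub : closedBall x₀ δ' ⊆ U := (closedBall_subset_ball hδ'δ).trans hball
  obtain ⟨x, hx, hx₀, hmin⟩ := isClosed_closedBall.exists_ekeland (g := fun z => ‖f z - y‖)
    ((hf.mono hsub).sub continuousOn_const).norm.lowerSemicontinuousOn
    ⟨0, by rintro _ ⟨z, -, rfl⟩; positivity⟩ hσ (mem_closedBall_self hδ')
  have hxx₀ : dist x x₀ < δ' := by
    refine lt_of_le_of_lt ?_ hrδ'
    rw [le_div_iff₀ hσ]
    linarith [norm_nonneg (f x - y)]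
  refine ⟨x, closedBall_subset_ball hδ'δ hx, by_contra fun hne => ?_⟩
  obtain ⟨v, hv, hdescent⟩ :=
    exists_diniUpper_norm_sub_le_neg hcrc (hsub hx) (hα x (hsub hx)) (Ne.symm hne)
      (hσ.trans hσβ).le hβα
  have hlocal : ∀ᶠ z in 𝓝 x, ‖f x - y‖ ≤ ‖f z - y‖ + σ * dist z x := by
    filter_upwards [isOpen_ball.mem_nhds (mem_ball.2 hxx₀)] with z hz
    exact hmin z (ball_subset_closedBall hz)
  have hslope := neg_mul_norm_le_diniUpper (φ := fun z => ‖f z - y‖) hσ.le hlocal v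
  linarith [mul_le_of_le_one_right hσ.le hv]

end OpenMapping

theorem open_mapping_pseudoJacobian_general
    {X Y : Type*} [NormedAddCommGroup X] [NormedSpace ℝ X] [CompleteSpace X]
    [NormedAddCommGroup Y] [NormedSpace ℝ Y]
    {U : Set X} (hUopen : IsOpen U)
    {f : X → Y} (hf : ContinuousOn f U)
    {Jf : X → Set (X →L[ℝ] Y)}
    (hcrc : ChainRuleCond f Jf U)
    {α : ℝ} (hαpos : 0 < α)
    (hα : ∀ x ∈ U, ∀ T ∈ convexHull ℝ (Jf x), α ≤ nuIndex T) :
    (∀ (x₀ : X) (δ : ℝ), 0 < δ → Metric.ball x₀ δ ⊆ U →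
        Metric.ball (f x₀) (δ * α) ⊆ f '' Metric.ball x₀ δ) ∧
      IsOpen (f '' U) ∧
      ∀ W : Set X, W ⊆ U → IsOpen W → IsOpen (f '' W) := by
  have hball (x₀ : X) (δ : ℝ) (hδ : 0 < δ) (hsub : ball x₀ δ ⊆ U) :
      ball (f x₀) (δ * α) ⊆ f '' ball x₀ δ :=
    ball_subset_image_ball hf hcrc hα hδ hsub
  have hopen (W : Set X) (hWU : W ⊆ U) (hW : IsOpen W) : IsOpen (f '' W) := by
    refine Metric.isOpen_iff.2 ?_
    rintro _ ⟨x, hx, rfl⟩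
    obtain ⟨δ, hδ, hδW⟩ := Metric.isOpen_iff.1 hW x hx
    exact ⟨δ * α, by positivity, (hball x δ hδ (hδW.trans hWU)).trans (image_mono hδW)⟩
  exact ⟨hball, hopen U subset_rfl hUopen, hopen⟩

/-- Open mapping theorem: if `Jf` is a pseudo-Jacobian mapping for `f` on `U`
satisfying the chain rule condition, and `α > 0` is a lower bound for the surjectivity
indices of all operators in `co (Jf x)`, `x ∈ U`, then `B(f x₀, δ α) ⊆ f (B(x₀, δ))`
for every ball `B(x₀, δ) ⊆ U`; consequently `f(U)` is open and `f` is an open map. -/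
theorem open_mapping_pseudoJacobian
    {X Y : Type*} [NormedAddCommGroup X] [NormedSpace ℝ X] [CompleteSpace X]
    [NormedAddCommGroup Y] [NormedSpace ℝ Y] [CompleteSpace Y]
    {U : Set X} (hUopen : IsOpen U)
    {f : X → Y} (hf : ContinuousOn f U)
    {Jf : X → Set (X →L[ℝ] Y)} (hJf : ∀ x ∈ U, IsPseudoJacobianAt f (Jf x) x)
    (hcrc : ChainRuleCond f Jf U)
    {α : ℝ} (hαpos : 0 < α)
    (hα : ∀ x ∈ U, ∀ T ∈ convexHull ℝ (Jf x), α ≤ nuIndex T) :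
    (∀ (x₀ : X) (δ : ℝ), 0 < δ → Metric.ball x₀ δ ⊆ U →
        Metric.ball (f x₀) (δ * α) ⊆ f '' Metric.ball x₀ δ) ∧
      IsOpen (f '' U) ∧
      ∀ W : Set X, W ⊆ U → IsOpen W → IsOpen (f '' W) :=
  open_mapping_pseudoJacobian_general hUopen hf hcrc hαpos hα
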